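/- arXiv:2102.04630 — 3 statements merged into one kernel-verified Lean document; each statement's English description precedes it below -/
import Mathlib

section
/- Let h > 0 and let u : ℤ² → ℝ solve Lu_i = f(i, u_i) for all i ∈ ℤ², where f satisfies the structural condition (H⁺) with data L_f⁺, κ₀⁺ and the structural condition (H⁻) with data L_f⁻, κ₀⁻. Assume both the forward and backward nondegeneracy conditions hold, that κ₁⁺, κ₂⁺ and κ₁⁻, κ₂⁻ are finite, and that for some ϑ∞⁺, ϑ∞⁻ ∈ (−π,π] the quantities κ₃^±, κ₄^±, κ₅^±, κ₆^±, κ₇^± are all finite. Then Σ_{i∈ℤ², j∈{1,2}} [ (ρ_i⁺)²( |Dⱼ⁺ϑ_i⁺|² + |Dⱼ⁻ϑ_i⁺|² ) + (ρ_i⁻)²( |Dⱼ⁺ϑ_i⁻|² + |Dⱼ⁻ϑ_i⁻|² ) ] ≤ C·h, where κ_m := κ_m⁺ + κ_m⁻ and C := 4( κ₂ + 2e^{2π}κ₃ + 2e^{2π}κ₄ + 2κ₅ + κ₆ + κ₇ ). -/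
/-!
For `U = U⁺` (resp. `U⁻`) write `U = ρ e^{iθ}`. Differencing `Lu = f(·, u)` shows that `U` solves
`ΔU = h² (L_f U + E)` for the five-point Laplacian `Δ`, with `|E| ≤ κ₀ h` by (H^±). Hence the
current `A = Im (conj U_i · U_{i+eⱼ}) = ρ_i ρ_{i+eⱼ} sin δ`, `δ = θ_{i+eⱼ} − θ_i`, has divergence
`h² Im (conj U · E)`, and summation by parts against `θ − ϑ∞` gives `Σ A δ ≤ h³ κ₅`. On each bond
`(ρ_i² + ρ_{i+eⱼ}²) δ² = 2 A δ + 2 ρ_i ρ_{i+eⱼ} δ (δ − sin δ) + (ρ_{i+eⱼ} − ρ_i)² δ²`, and by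
`|δ| ≤ 2π`, `|δ − sin δ| ≤ |δ|³ / 6` and `|δ| ≤ |θ_i − ϑ∞| + |θ_{i+eⱼ} − ϑ∞|` the last two terms
are at most `h³` times the summands of `κ₃ + 2πκ₄ + κ₇`. As `δ = h Dⱼ⁺θ_i = h Dⱼ⁻θ_{i+eⱼ}`, dividing
by `h²` and summing over bonds bounds the left side for each sign by `(κ₃ + 2πκ₄ + 2κ₅ + κ₇) h`.
-/

noncomputable section

open Real

namespace FK

/-- Lattice unit vectors `e₁ = (1,0)`, `e₂ = (0,1)`. -/
def ee : Fin 2 → ℤ × ℤ := ![(1, 0), (0, 1)]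

/-- Forward difference quotient `Dⱼ⁺u_i := (u_{i+eⱼ} − u_i)/h`. -/
def Dp (h : ℝ) (u : ℤ × ℤ → ℝ) (j : Fin 2) (i : ℤ × ℤ) : ℝ :=
  (u (i + ee j) - u i) / h

/-- Backward difference quotient `Dⱼ⁻u_i := (u_i − u_{i−eⱼ})/h`. -/
def Dm (h : ℝ) (u : ℤ × ℤ → ℝ) (j : Fin 2) (i : ℤ × ℤ) : ℝ :=
  (u i - u (i - ee j)) / h

/-- Directional operator `Lⱼu_i := (u_{i+eⱼ} + u_{i−eⱼ} − 2u_i)/h²`. -/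
def Lj (h : ℝ) (u : ℤ × ℤ → ℝ) (j : Fin 2) (i : ℤ × ℤ) : ℝ :=
  (u (i + ee j) + u (i - ee j) - 2 * u i) / h ^ 2

/-- Discrete Laplacian `Lu_i := L₁u_i + L₂u_i`. -/
def Lap (h : ℝ) (u : ℤ × ℤ → ℝ) (i : ℤ × ℤ) : ℝ :=
  Lj h u 0 i + Lj h u 1 i

/-- `U_i⁺ := D₁⁺u_i + 𝒾·D₂⁺u_i`. -/
def Up (h : ℝ) (u : ℤ × ℤ → ℝ) (i : ℤ × ℤ) : ℂ :=
  (Dp h u 0 i : ℂ) + Complex.I * (Dp h u 1 i : ℂ)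

/-- `ρ_i⁺ := |U_i⁺|`. -/
def rhoP (h : ℝ) (u : ℤ × ℤ → ℝ) (i : ℤ × ℤ) : ℝ := ‖Up h u i‖

/-- `ϑ_i⁺ ∈ (−π,π]`, the argument of `U_i⁺`. -/
def thetaP (h : ℝ) (u : ℤ × ℤ → ℝ) (i : ℤ × ℤ) : ℝ := (Up h u i).arg

/-- `U_i⁻ := D₁⁻u_i + 𝒾·D₂⁻u_i`. -/
def Um (h : ℝ) (u : ℤ × ℤ → ℝ) (i : ℤ × ℤ) : ℂ :=
  (Dm h u 0 i : ℂ) + Complex.I * (Dm h u 1 i : ℂ)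

/-- `ρ_i⁻ := |U_i⁻|`. -/
def rhoM (h : ℝ) (u : ℤ × ℤ → ℝ) (i : ℤ × ℤ) : ℝ := ‖Um h u i‖

/-- `ϑ_i⁻ ∈ (−π,π]`, the argument of `U_i⁻`. -/
def thetaM (h : ℝ) (u : ℤ × ℤ → ℝ) (i : ℤ × ℤ) : ℝ := (Um h u i).arg

/-- Structural condition (H⁺) on a source term `f` with data `Lf` and `k0`. -/
def Hplus (h : ℝ) (u : ℤ × ℤ → ℝ) (f Lf : ℤ × ℤ → ℝ → ℝ) (k0 : ℝ) : Prop :=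
  ∀ i : ℤ × ℤ,
    (∑ j : Fin 2,
        |f (i + ee j) (u (i + ee j)) - f i (u i) - Lf i (u i) * (u (i + ee j) - u i)| / h)
      ≤ k0 * h

/-- Structural condition (H⁻) on a source term `f` with data `Lf` and `k0`. -/
def Hminus (h : ℝ) (u : ℤ × ℤ → ℝ) (f Lf : ℤ × ℤ → ℝ → ℝ) (k0 : ℝ) : Prop :=
  ∀ i : ℤ × ℤ,
    (∑ j : Fin 2,
        |f i (u i) - f (i - ee j) (u (i - ee j)) - Lf i (u i) * (u i - u (i - ee j))| / h)
      ≤ k0 * h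

/-- Forward nondegeneracy condition. -/
def NondegP (u : ℤ × ℤ → ℝ) : Prop :=
  ∀ i : ℤ × ℤ, 0 < (u (i + ee 0) - u i) ^ 2 + (u (i + ee 1) - u i) ^ 2

/-- Backward nondegeneracy condition. -/
def NondegM (u : ℤ × ℤ → ℝ) : Prop :=
  ∀ i : ℤ × ℤ, 0 < (u (i - ee 0) - u i) ^ 2 + (u (i - ee 1) - u i) ^ 2

end FK

open FK

open ComplexConjugate

lemma Complex.im_conj_mul_eq_mul_sin_arg_sub (z w : ℂ) :
    (conj z * w).im = ‖z‖ * ‖w‖ * Real.sin (w.arg - z.arg) := by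
  rw [Real.sin_sub, Complex.mul_im, Complex.conj_re, Complex.conj_im,
    ← Complex.norm_mul_cos_arg z, ← Complex.norm_mul_sin_arg z,
    ← Complex.norm_mul_cos_arg w, ← Complex.norm_mul_sin_arg w]
  ring

lemma Complex.norm_ofReal_add_I_mul_le (x y : ℝ) : ‖(x : ℂ) + Complex.I * y‖ ≤ |x| + |y| := by
  simpa using norm_add_le (x : ℂ) (Complex.I * y)

lemma sq_add_sq_mul_sq_le {a b δ t : ℝ} (ha : 0 ≤ a) (hb : 0 ≤ b) (hδ : |δ| ≤ t) :
    (a ^ 2 + b ^ 2) * δ ^ 2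
      ≤ 2 * (a * b * Real.sin δ * δ) + (a * b * |δ| ^ 3 + (b - a) ^ 2 * |δ|) * t := by
  have hab : 0 ≤ a * b := mul_nonneg ha hb
  have ht : 0 ≤ t := (abs_nonneg δ).trans hδ
  have hsin : 2 * (a * b * (δ - Real.sin δ) * δ) ≤ a * b * |δ| ^ 3 * t :=
    calc 2 * (a * b * (δ - Real.sin δ) * δ) ≤ 2 * (a * b * (|δ - Real.sin δ| * |δ|)) := by
          rw [mul_assoc (a * b), ← abs_mul]; gcongr; exact le_abs_self _
      _ ≤ 2 * (a * b * (|δ| ^ 3 / 6 * t)) := by gcongr; exact Real.abs_sub_sin_le δ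
      _ ≤ a * b * |δ| ^ 3 * t := by
          nlinarith [mul_nonneg (mul_nonneg hab (pow_nonneg (abs_nonneg δ) 3)) ht]
  have hdiff : (b - a) ^ 2 * δ ^ 2 ≤ (b - a) ^ 2 * |δ| * t := by
    rw [← sq_abs δ, sq |δ|, ← mul_assoc]; gcongr
  linear_combination hsin + hdiff

lemma mul_mul_abs_mul_pow_three_add_le {a b h x y c : ℝ} (ha : 0 ≤ a) (hh : 0 ≤ h)
    (hb : b ≤ a + h * |y|) (hx : h * |x| ≤ c) :
    a * b * |h * x| ^ 3 + (h * y) ^ 2 * |h * x|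
      ≤ h ^ 3 * (a ^ 2 * |x| ^ 3 + c * (a * |y| * |x| ^ 2) + |y| ^ 2 * |x|) := by
  rw [abs_mul, abs_of_nonneg hh, show (h * y) ^ 2 = h ^ 2 * |y| ^ 2 by rw [mul_pow, sq_abs]]
  have hcube : a * |y| * |x| ^ 2 * (h * |x|) ≤ a * |y| * |x| ^ 2 * c := by gcongr
  nlinarith [mul_le_mul_of_nonneg_right (mul_le_mul_of_nonneg_left hb ha)
    (by positivity : 0 ≤ (h * |x|) ^ 3), pow_nonneg hh 3]

lemma ENNReal.tsum_ofReal_le_ofReal_of_hasSum {α : Type*} {f F : α → ℝ} {s : ℝ}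
    (hf : ∀ a, 0 ≤ f a) (hfF : ∀ a, f a ≤ F a) (hF : HasSum F s) :
    ∑' a, ENNReal.ofReal (f a) ≤ ENNReal.ofReal s := by
  rw [← hF.tsum_eq, ENNReal.ofReal_tsum_of_nonneg (fun a => (hf a).trans (hfF a)) hF.summable]
  exact ENNReal.tsum_le_tsum fun a => ENNReal.ofReal_le_ofReal (hfF a)

namespace FK

section Lattice

variable {ι J : Type*}

lemma summable_comp_fst [Finite J] {w : ι → ℝ} (hw : Summable w) (hw0 : 0 ≤ w) :
    Summable fun p : ι × J => w p.1 := by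
  simpa using hw.mul_of_nonneg (Summable.of_finite (f := fun _ : J => (1 : ℝ))) hw0
    fun _ => zero_le_one

variable [AddCommGroup ι]

def shiftEquiv (e : J → ι) : ι × J ≃ ι × J where
  toFun p := (p.1 + e p.2, p.2)
  invFun p := (p.1 - e p.2, p.2)
  left_inv p := by simp
  right_inv p := by simp

@[simp]
lemma shiftEquiv_apply (e : J → ι) (p : ι × J) : shiftEquiv e p = (p.1 + e p.2, p.2) := rfl

@[simp]
lemma shiftEquiv_symm_apply (e : J → ι) (p : ι × J) :
    (shiftEquiv e).symm p = (p.1 - e p.2, p.2) := rfl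

theorem tsum_sub_mul_eq_tsum_mul_sum [Fintype J] (e : J → ι) (g : ι → ℝ) (F : ι × J → ℝ)
    (hg : Summable fun p : ι × J => g p.1 * F p)
    (hge : Summable fun p : ι × J => g (p.1 + e p.2) * F p) :
    ∑' p : ι × J, (g (p.1 + e p.2) - g p.1) * F p
      = ∑' i, g i * ∑ j, (F (i - e j, j) - F (i, j)) := by
  set G : ι × J → ℝ := fun p => g p.1 * F (p.1 - e p.2, p.2)
  have hG : G ∘ shiftEquiv e = fun p => g (p.1 + e p.2) * F p := by
    funext p; simp [G]
  have hGs : Summable G := (shiftEquiv e).summable_iff.mp (hG ▸ hge)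
  calc ∑' p : ι × J, (g (p.1 + e p.2) - g p.1) * F p
      = ∑' p, g (p.1 + e p.2) * F p - ∑' p, g p.1 * F p := by
        simp_rw [sub_mul]; exact hge.tsum_sub hg
    _ = ∑' p, G p - ∑' p, g p.1 * F p := by
        rw [← hG, ← (shiftEquiv e).tsum_eq G]; rfl
    _ = ∑' p, (G p - g p.1 * F p) := (hGs.tsum_sub hg).symm
    _ = ∑' i, ∑' j, (G (i, j) - g i * F (i, j)) := (hGs.sub hg).tsum_prod
    _ = ∑' i, g i * ∑ j, (F (i - e j, j) - F (i, j)) := by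
        simp only [G, tsum_fintype, Finset.mul_sum, mul_sub]

end Lattice

lemma Dm_add_ee (h : ℝ) (v : ℤ × ℤ → ℝ) (j : Fin 2) (i : ℤ × ℤ) :
    Dm h v j (i + ee j) = Dp h v j i := by
  simp [Dm, Dp]

def fivePointLap (U : ℤ × ℤ → ℂ) (i : ℤ × ℤ) : ℂ :=
  U (i + ee 0) + U (i - ee 0) + U (i + ee 1) + U (i - ee 1) - 4 * U i

def bondIm (U : ℤ × ℤ → ℂ) (p : (ℤ × ℤ) × Fin 2) : ℝ :=
  (conj (U p.1) * U (p.1 + ee p.2)).im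

lemma abs_bondIm_le (U : ℤ × ℤ → ℂ) (p : (ℤ × ℤ) × Fin 2) :
    |bondIm U p| ≤ ‖U p.1‖ * ‖U (p.1 + ee p.2)‖ := by
  simpa [bondIm] using Complex.abs_im_le_norm (conj (U p.1) * U (p.1 + ee p.2))

-- `conj (U i) * (c * U i)` is real, so only the defect `E` survives in the divergence.
lemma sum_bondIm_sub {h c : ℝ} {U : ℤ × ℤ → ℂ} {E : ℂ} {i : ℤ × ℤ}
    (hU : fivePointLap U i = (h : ℂ) ^ 2 * (c * U i + E)) :
    ∑ j : Fin 2, (bondIm U (i - ee j, j) - bondIm U (i, j))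
      = -(h ^ 2 * (conj (U i) * E).im) := by
  have key := congrArg (fun z => (conj (U i) * z).im) hU
  rw [show (h : ℂ) ^ 2 = ((h ^ 2 : ℝ) : ℂ) by push_cast; ring] at key
  simp only [fivePointLap, Complex.mul_im, Complex.mul_re, Complex.add_re, Complex.add_im,
    Complex.sub_re, Complex.sub_im, Complex.conj_re, Complex.conj_im, Complex.ofReal_re,
    Complex.ofReal_im, Complex.re_ofNat, Complex.im_ofNat] at key
  simp only [Fin.sum_univ_two, bondIm, sub_add_cancel, Complex.mul_im, Complex.conj_re,
    Complex.conj_im]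
  linear_combination -key

def fwdDefect (h : ℝ) (u : ℤ × ℤ → ℝ) (f Lf : ℤ × ℤ → ℝ → ℝ) (j : Fin 2) (i : ℤ × ℤ) : ℝ :=
  (f (i + ee j) (u (i + ee j)) - f i (u i) - Lf i (u i) * (u (i + ee j) - u i)) / h

def bwdDefect (h : ℝ) (u : ℤ × ℤ → ℝ) (f Lf : ℤ × ℤ → ℝ → ℝ) (j : Fin 2) (i : ℤ × ℤ) : ℝ :=
  (f i (u i) - f (i - ee j) (u (i - ee j)) - Lf i (u i) * (u i - u (i - ee j))) / h

lemma fivePointLap_Up {h : ℝ} (hh : h ≠ 0) {u : ℤ × ℤ → ℝ} {f : ℤ × ℤ → ℝ → ℝ}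
    (heq : ∀ i, Lap h u i = f i (u i)) (Lf : ℤ × ℤ → ℝ → ℝ) (i : ℤ × ℤ) :
    fivePointLap (Up h u) i = (h : ℂ) ^ 2 * (Lf i (u i) * Up h u i
      + (fwdDefect h u f Lf 0 i + Complex.I * fwdDefect h u f Lf 1 i)) := by
  simp only [fwdDefect, ← heq]
  rw [show (h : ℂ) ^ 2 = ((h ^ 2 : ℝ) : ℂ) by push_cast; ring]
  obtain ⟨a, b⟩ := i
  apply Complex.ext <;>
  · simp only [fivePointLap, Up, Complex.add_re, Complex.add_im, Complex.sub_re, Complex.sub_im,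
      Complex.mul_re, Complex.mul_im, Complex.I_re, Complex.I_im, Complex.ofReal_re,
      Complex.ofReal_im, Complex.re_ofNat, Complex.im_ofNat]
    simp only [Dp, Lap, Lj, ee, Matrix.cons_val_zero, Matrix.cons_val_one,
      Prod.mk_add_mk, Prod.mk_sub_mk, add_zero, sub_zero, add_sub_cancel_right, sub_add_cancel]
    field_simp
    ring

lemma fivePointLap_Um {h : ℝ} (hh : h ≠ 0) {u : ℤ × ℤ → ℝ} {f : ℤ × ℤ → ℝ → ℝ}
    (heq : ∀ i, Lap h u i = f i (u i)) (Lf : ℤ × ℤ → ℝ → ℝ) (i : ℤ × ℤ) :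
    fivePointLap (Um h u) i = (h : ℂ) ^ 2 * (Lf i (u i) * Um h u i
      + (bwdDefect h u f Lf 0 i + Complex.I * bwdDefect h u f Lf 1 i)) := by
  simp only [bwdDefect, ← heq]
  rw [show (h : ℂ) ^ 2 = ((h ^ 2 : ℝ) : ℂ) by push_cast; ring]
  obtain ⟨a, b⟩ := i
  apply Complex.ext <;>
  · simp only [fivePointLap, Um, Complex.add_re, Complex.add_im, Complex.sub_re, Complex.sub_im,
      Complex.mul_re, Complex.mul_im, Complex.I_re, Complex.I_im, Complex.ofReal_re,
      Complex.ofReal_im, Complex.re_ofNat, Complex.im_ofNat]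
    simp only [Dm, Lap, Lj, ee, Matrix.cons_val_zero, Matrix.cons_val_one,
      Prod.mk_add_mk, Prod.mk_sub_mk, add_zero, sub_zero, add_sub_cancel_right, sub_add_cancel]
    field_simp
    ring

lemma norm_Up_le {h : ℝ} {u : ℤ × ℤ → ℝ} {κ₁ : ℝ} (hκ₁ : ∀ i j, |Dp h u j i| ≤ κ₁)
    (i : ℤ × ℤ) : ‖Up h u i‖ ≤ κ₁ + κ₁ :=
  (Complex.norm_ofReal_add_I_mul_le _ _).trans (add_le_add (hκ₁ i 0) (hκ₁ i 1))

lemma norm_Um_le {h : ℝ} {u : ℤ × ℤ → ℝ} {κ₁ : ℝ} (hκ₁ : ∀ i j, |Dm h u j i| ≤ κ₁)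
    (i : ℤ × ℤ) : ‖Um h u i‖ ≤ κ₁ + κ₁ :=
  (Complex.norm_ofReal_add_I_mul_le _ _).trans (add_le_add (hκ₁ i 0) (hκ₁ i 1))

lemma norm_fwdDefect_le {h : ℝ} (hh : 0 < h) {u : ℤ × ℤ → ℝ} {f Lf : ℤ × ℤ → ℝ → ℝ} {κ₀ : ℝ}
    (hH : Hplus h u f Lf κ₀) (i : ℤ × ℤ) :
    ‖(fwdDefect h u f Lf 0 i : ℂ) + Complex.I * fwdDefect h u f Lf 1 i‖ ≤ κ₀ * h := by
  refine (Complex.norm_ofReal_add_I_mul_le _ _).trans ?_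
  simpa [Fin.sum_univ_two, fwdDefect, abs_div, abs_of_pos hh] using hH i

lemma norm_bwdDefect_le {h : ℝ} (hh : 0 < h) {u : ℤ × ℤ → ℝ} {f Lf : ℤ × ℤ → ℝ → ℝ} {κ₀ : ℝ}
    (hH : Hminus h u f Lf κ₀) (i : ℤ × ℤ) :
    ‖(bwdDefect h u f Lf 0 i : ℂ) + Complex.I * bwdDefect h u f Lf 1 i‖ ≤ κ₀ * h := by
  refine (Complex.norm_ofReal_add_I_mul_le _ _).trans ?_
  simpa [Fin.sum_univ_two, bwdDefect, abs_div, abs_of_pos hh] using hH i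

def modulus (U : ℤ × ℤ → ℂ) (i : ℤ × ℤ) : ℝ := ‖U i‖

def phase (U : ℤ × ℤ → ℂ) (i : ℤ × ℤ) : ℝ := (U i).arg

def bondDiff (v : ℤ × ℤ → ℝ) (p : (ℤ × ℤ) × Fin 2) : ℝ := v (p.1 + ee p.2) - v p.1

lemma bondDiff_eq {h : ℝ} (hh : h ≠ 0) (v : ℤ × ℤ → ℝ) (p : (ℤ × ℤ) × Fin 2) :
    bondDiff v p = h * Dp h v p.2 p.1 := by
  rw [bondDiff, Dp]; field_simp

lemma bondDiff_shiftEquiv_symm {h : ℝ} (hh : h ≠ 0) (v : ℤ × ℤ → ℝ) (p : (ℤ × ℤ) × Fin 2) :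
    bondDiff v ((shiftEquiv ee).symm p) = h * Dm h v p.2 p.1 := by
  rw [shiftEquiv_symm_apply, bondDiff, Dm, sub_add_cancel]; field_simp

variable {U : ℤ × ℤ → ℂ}

lemma modulus_nonneg (i : ℤ × ℤ) : 0 ≤ modulus U i := norm_nonneg _

lemma bondIm_eq (p : (ℤ × ℤ) × Fin 2) :
    bondIm U p = modulus U p.1 * modulus U (p.1 + ee p.2) * Real.sin (bondDiff (phase U) p) :=
  Complex.im_conj_mul_eq_mul_sin_arg_sub _ _

lemma abs_bondDiff_phase_le (p : (ℤ × ℤ) × Fin 2) : |bondDiff (phase U) p| ≤ 2 * π := by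
  have h₁ := Complex.abs_arg_le_pi (U (p.1 + ee p.2))
  have h₂ := Complex.abs_arg_le_pi (U p.1)
  simp only [bondDiff, phase]
  linarith [abs_sub (U (p.1 + ee p.2)).arg (U p.1).arg]

lemma summable_mul_bondIm {M : ℝ} (hM : ∀ i, ‖U i‖ ≤ M) {g : ℤ × ℤ → ℝ}
    (hw : Summable fun i => modulus U i * |g i|) :
    (Summable fun p : (ℤ × ℤ) × Fin 2 => g p.1 * bondIm U p) ∧
      Summable fun p : (ℤ × ℤ) × Fin 2 => g (p.1 + ee p.2) * bondIm U p := by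
  have hw₁ : Summable fun p : (ℤ × ℤ) × Fin 2 => modulus U p.1 * |g p.1| :=
    summable_comp_fst hw fun i => mul_nonneg (modulus_nonneg i) (abs_nonneg _)
  have hw₂ : Summable fun p : (ℤ × ℤ) × Fin 2 =>
      modulus U (p.1 + ee p.2) * |g (p.1 + ee p.2)| :=
    (shiftEquiv ee).summable_iff.mpr hw₁
  have hA := abs_bondIm_le U
  constructor
  · refine (hw₁.mul_left M).of_norm_bounded fun p => ?_
    rw [Real.norm_eq_abs, abs_mul]
    have := mul_le_mul_of_nonneg_left (hM (p.1 + ee p.2)) (modulus_nonneg (U := U) p.1)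
    calc |g p.1| * |bondIm U p| ≤ |g p.1| * (modulus U p.1 * M) := by
          gcongr; exact (hA p).trans this
      _ = M * (modulus U p.1 * |g p.1|) := by ring
  · refine (hw₂.mul_left M).of_norm_bounded fun p => ?_
    rw [Real.norm_eq_abs, abs_mul]
    have := mul_le_mul_of_nonneg_right (hM p.1) (modulus_nonneg (U := U) (p.1 + ee p.2))
    calc |g (p.1 + ee p.2)| * |bondIm U p|
        ≤ |g (p.1 + ee p.2)| * (M * modulus U (p.1 + ee p.2)) := by
          gcongr; exact (hA p).trans this
      _ = M * (modulus U (p.1 + ee p.2) * |g (p.1 + ee p.2)|) := by ring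

lemma summable_bondIm_mul_and_tsum_le {h : ℝ} (hh : 0 < h) {c : ℤ × ℤ → ℝ} {E : ℤ × ℤ → ℂ}
    (hU : ∀ i, fivePointLap U i = (h : ℂ) ^ 2 * (c i * U i + E i))
    {M : ℝ} (hM : ∀ i, ‖U i‖ ≤ M) {κ₀ : ℝ} (hκ₀ : κ₀ ≠ 0) (hE : ∀ i, ‖E i‖ ≤ κ₀ * h)
    {θ₀ κ₅ : ℝ} (h5 : HasSum (fun i => κ₀ * (modulus U i * |phase U i - θ₀|)) κ₅) :
    (Summable fun p => bondIm U p * bondDiff (phase U) p) ∧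
      ∑' p, bondIm U p * bondDiff (phase U) p ≤ h ^ 3 * κ₅ := by
  obtain ⟨hs₁, hs₂⟩ := summable_mul_bondIm hM ((summable_mul_left_iff hκ₀).mp h5.summable)
  have hδ : (fun p => bondIm U p * bondDiff (phase U) p)
      = fun p => ((phase U (p.1 + ee p.2) - θ₀) - (phase U p.1 - θ₀)) * bondIm U p := by
    funext p; rw [bondDiff]; ring
  have hdiv : ∀ i, ‖(phase U i - θ₀) * ∑ j, (bondIm U (i - ee j, j) - bondIm U (i, j))‖
      ≤ h ^ 3 * (κ₀ * (modulus U i * |phase U i - θ₀|)) := fun i => by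
    rw [sum_bondIm_sub (hU i), Real.norm_eq_abs, abs_mul, abs_neg, abs_mul,
      abs_of_nonneg (by positivity : (0 : ℝ) ≤ h ^ 2)]
    have hb : |(conj (U i) * E i).im| ≤ modulus U i * (κ₀ * h) := by
      refine (Complex.abs_im_le_norm _).trans ?_
      rw [norm_mul, Complex.norm_conj]
      exact mul_le_mul_of_nonneg_left (hE i) (norm_nonneg _)
    calc |phase U i - θ₀| * (h ^ 2 * |(conj (U i) * E i).im|)
        ≤ |phase U i - θ₀| * (h ^ 2 * (modulus U i * (κ₀ * h))) := by gcongr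
      _ = h ^ 3 * (κ₀ * (modulus U i * |phase U i - θ₀|)) := by ring
  have hdivs := (h5.summable.mul_left (h ^ 3)).of_norm_bounded hdiv
  refine ⟨hδ ▸ (hs₂.sub hs₁).congr fun p => (sub_mul _ _ _).symm, ?_⟩
  rw [hδ, tsum_sub_mul_eq_tsum_mul_sum ee (phase U · - θ₀) _ hs₁ hs₂, ← h5.tsum_eq,
    ← tsum_mul_left]
  exact hdivs.tsum_le_tsum (fun i => (Real.le_norm_self _).trans (hdiv i))
    (h5.summable.mul_left _)

def bondRem (U : ℤ × ℤ → ℂ) (p : (ℤ × ℤ) × Fin 2) : ℝ :=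
  modulus U p.1 * modulus U (p.1 + ee p.2) * |bondDiff (phase U) p| ^ 3
    + bondDiff (modulus U) p ^ 2 * |bondDiff (phase U) p|

lemma bondRem_nonneg (p : (ℤ × ℤ) × Fin 2) : 0 ≤ bondRem U p := by
  have := modulus_nonneg (U := U) p.1
  have := modulus_nonneg (U := U) (p.1 + ee p.2)
  unfold bondRem; positivity

lemma sq_add_sq_mul_bondDiff_sq_le (θ₀ : ℝ) (p : (ℤ × ℤ) × Fin 2) :
    (modulus U p.1 ^ 2 + modulus U (p.1 + ee p.2) ^ 2) * bondDiff (phase U) p ^ 2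
      ≤ 2 * (bondIm U p * bondDiff (phase U) p)
        + bondRem U p * (|phase U p.1 - θ₀| + |phase U (p.1 + ee p.2) - θ₀|) := by
  have hδ : |bondDiff (phase U) p| ≤ |phase U p.1 - θ₀| + |phase U (p.1 + ee p.2) - θ₀| := by
    rw [add_comm, abs_sub_comm (phase U p.1)]; exact abs_sub_le _ _ _
  rw [bondIm_eq]
  exact sq_add_sq_mul_sq_le (modulus_nonneg _) (modulus_nonneg _) hδ

lemma bondRem_add_bondRem_symm_le {h : ℝ} (hh : 0 < h) (p : (ℤ × ℤ) × Fin 2) :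
    bondRem U p + bondRem U ((shiftEquiv ee).symm p)
      ≤ h ^ 3 * (modulus U p.1 ^ 2 *
            (|Dp h (phase U) p.2 p.1| ^ 3 + |Dm h (phase U) p.2 p.1| ^ 3)
          + 2 * π * (modulus U p.1 *
            (|Dp h (modulus U) p.2 p.1| * |Dp h (phase U) p.2 p.1| ^ 2
              + |Dm h (modulus U) p.2 p.1| * |Dm h (phase U) p.2 p.1| ^ 2))
          + (|Dp h (modulus U) p.2 p.1| ^ 2 * |Dp h (phase U) p.2 p.1|
              + |Dm h (modulus U) p.2 p.1| ^ 2 * |Dm h (phase U) p.2 p.1|)) := by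
  have hρ := modulus_nonneg (U := U) p.1
  have hfwd := abs_bondDiff_phase_le (U := U) p
  have hbwd := abs_bondDiff_phase_le (U := U) ((shiftEquiv ee).symm p)
  rw [bondDiff_eq hh.ne', abs_mul, abs_of_pos hh] at hfwd
  rw [bondDiff_shiftEquiv_symm hh.ne', abs_mul, abs_of_pos hh] at hbwd
  have hb₁ : modulus U (p.1 + ee p.2) ≤ modulus U p.1 + h * |Dp h (modulus U) p.2 p.1| := by
    have := bondDiff_eq hh.ne' (modulus U) p
    rw [bondDiff] at this
    linarith [mul_le_mul_of_nonneg_left (le_abs_self (Dp h (modulus U) p.2 p.1)) hh.le]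
  have hb₂ : modulus U (p.1 - ee p.2) ≤ modulus U p.1 + h * |Dm h (modulus U) p.2 p.1| := by
    have := bondDiff_shiftEquiv_symm hh.ne' (modulus U) p
    rw [bondDiff, shiftEquiv_symm_apply, sub_add_cancel] at this
    linarith [mul_le_mul_of_nonneg_left (neg_le_abs (Dm h (modulus U) p.2 p.1)) hh.le]
  have h₁ := mul_mul_abs_mul_pow_three_add_le hρ hh.le hb₁ hfwd
  have h₂ := mul_mul_abs_mul_pow_three_add_le hρ hh.le hb₂ hbwd
  rw [bondRem, bondRem, bondDiff_shiftEquiv_symm hh.ne', bondDiff_shiftEquiv_symm hh.ne',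
    bondDiff_eq hh.ne', bondDiff_eq hh.ne']
  simp only [shiftEquiv_symm_apply, sub_add_cancel]
  linear_combination h₁ + h₂

lemma summable_bondRem_mul_and_tsum_le {h : ℝ} (hh : 0 < h) (θ₀ : ℝ) {κ₃ κ₄ κ₇ : ℝ}
    (h3 : HasSum (fun p : (ℤ × ℤ) × Fin 2 =>
      modulus U p.1 ^ 2 * (|Dp h (phase U) p.2 p.1| ^ 3 + |Dm h (phase U) p.2 p.1| ^ 3) *
        |phase U p.1 - θ₀|) κ₃)
    (h4 : HasSum (fun p : (ℤ × ℤ) × Fin 2 =>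
      modulus U p.1 *
        (|Dp h (modulus U) p.2 p.1| * |Dp h (phase U) p.2 p.1| ^ 2 +
         |Dm h (modulus U) p.2 p.1| * |Dm h (phase U) p.2 p.1| ^ 2) * |phase U p.1 - θ₀|) κ₄)
    (h7 : HasSum (fun p : (ℤ × ℤ) × Fin 2 =>
      (|Dp h (modulus U) p.2 p.1| ^ 2 * |Dp h (phase U) p.2 p.1| +
       |Dm h (modulus U) p.2 p.1| ^ 2 * |Dm h (phase U) p.2 p.1|) * |phase U p.1 - θ₀|) κ₇) :
    (Summable fun p : (ℤ × ℤ) × Fin 2 =>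
        bondRem U p * (|phase U p.1 - θ₀| + |phase U (p.1 + ee p.2) - θ₀|)) ∧
      ∑' p : (ℤ × ℤ) × Fin 2, bondRem U p * (|phase U p.1 - θ₀| + |phase U (p.1 + ee p.2) - θ₀|)
        ≤ h ^ 3 * (κ₃ + 2 * π * κ₄ + κ₇) := by
  set F := fun p : (ℤ × ℤ) × Fin 2 => bondRem U p * |phase U p.1 - θ₀|
  set G := fun p : (ℤ × ℤ) × Fin 2 => bondRem U ((shiftEquiv ee).symm p) * |phase U p.1 - θ₀|
  have hF₀ : ∀ p, 0 ≤ F p := fun p => mul_nonneg (bondRem_nonneg p) (abs_nonneg _)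
  have hG₀ : ∀ p, 0 ≤ G p := fun p => mul_nonneg (bondRem_nonneg _) (abs_nonneg _)
  obtain ⟨K, hK, hFG⟩ : ∃ K, HasSum K (κ₃ + 2 * π * κ₄ + κ₇) ∧ ∀ p, F p + G p ≤ h ^ 3 * K p :=
    ⟨_, (h3.add (h4.mul_left (2 * π))).add h7, fun p => by
      have := mul_le_mul_of_nonneg_right (bondRem_add_bondRem_symm_le (U := U) hh p)
        (abs_nonneg (phase U p.1 - θ₀))
      simp only [F, G]
      linear_combination this⟩
  have hFs : Summable F :=
    (hK.summable.mul_left (h ^ 3)).of_nonneg_of_le hF₀ fun p => by linarith [hFG p, hG₀ p]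
  have hGs : Summable G :=
    (hK.summable.mul_left (h ^ 3)).of_nonneg_of_le hG₀ fun p => by linarith [hFG p, hF₀ p]
  have hR : (fun p : (ℤ × ℤ) × Fin 2 =>
      bondRem U p * (|phase U p.1 - θ₀| + |phase U (p.1 + ee p.2) - θ₀|))
        = fun p => F p + G (shiftEquiv ee p) := by
    funext p; simp [F, G, mul_add]
  have hGσ : Summable fun p => G (shiftEquiv ee p) := (shiftEquiv ee).summable_iff.mpr hGs
  refine ⟨hR ▸ hFs.add hGσ, ?_⟩
  rw [hR, hFs.tsum_add hGσ, (shiftEquiv ee).tsum_eq G, ← hFs.tsum_add hGs, ← hK.tsum_eq,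
    ← tsum_mul_left]
  exact (hFs.add hGs).tsum_le_tsum hFG (hK.summable.mul_left (h ^ 3))

lemma tsum_ofReal_sq_mul_eq (h : ℝ) (ρ θ : ℤ × ℤ → ℝ) :
    ∑' p : (ℤ × ℤ) × Fin 2,
        ENNReal.ofReal (ρ p.1 ^ 2 * (|Dp h θ p.2 p.1| ^ 2 + |Dm h θ p.2 p.1| ^ 2))
      = ∑' p : (ℤ × ℤ) × Fin 2,
        ENNReal.ofReal ((ρ p.1 ^ 2 + ρ (p.1 + ee p.2) ^ 2) * Dp h θ p.2 p.1 ^ 2) := by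
  have hσ := (shiftEquiv ee).tsum_eq fun p => ENNReal.ofReal (ρ p.1 ^ 2 * |Dm h θ p.2 p.1| ^ 2)
  simp only [shiftEquiv_apply, Dm_add_ee] at hσ
  calc ∑' p : (ℤ × ℤ) × Fin 2,
        ENNReal.ofReal (ρ p.1 ^ 2 * (|Dp h θ p.2 p.1| ^ 2 + |Dm h θ p.2 p.1| ^ 2))
      = ∑' p : (ℤ × ℤ) × Fin 2, (ENNReal.ofReal (ρ p.1 ^ 2 * |Dp h θ p.2 p.1| ^ 2)
          + ENNReal.ofReal (ρ p.1 ^ 2 * |Dm h θ p.2 p.1| ^ 2)) :=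
        tsum_congr fun p => by rw [mul_add, ENNReal.ofReal_add (by positivity) (by positivity)]
    _ = ∑' p : (ℤ × ℤ) × Fin 2, (ENNReal.ofReal (ρ p.1 ^ 2 * |Dp h θ p.2 p.1| ^ 2)
          + ENNReal.ofReal (ρ (p.1 + ee p.2) ^ 2 * |Dp h θ p.2 p.1| ^ 2)) := by
        rw [ENNReal.tsum_add, ENNReal.tsum_add, hσ]
    _ = _ := tsum_congr fun p => by
        rw [← ENNReal.ofReal_add (by positivity) (by positivity), sq_abs, add_mul]

theorem tsum_ofReal_modulus_sq_mul_le {h : ℝ} (hh : 0 < h) {U E : ℤ × ℤ → ℂ} {c : ℤ × ℤ → ℝ}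
    (hU : ∀ i, fivePointLap U i = (h : ℂ) ^ 2 * (c i * U i + E i))
    {M : ℝ} (hM : ∀ i, ‖U i‖ ≤ M) {κ₀ : ℝ} (hκ₀ : κ₀ ≠ 0) (hE : ∀ i, ‖E i‖ ≤ κ₀ * h)
    {θ₀ κ₃ κ₄ κ₅ κ₇ : ℝ}
    (h3 : HasSum (fun p : (ℤ × ℤ) × Fin 2 =>
      modulus U p.1 ^ 2 * (|Dp h (phase U) p.2 p.1| ^ 3 + |Dm h (phase U) p.2 p.1| ^ 3) *
        |phase U p.1 - θ₀|) κ₃)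
    (h4 : HasSum (fun p : (ℤ × ℤ) × Fin 2 =>
      modulus U p.1 *
        (|Dp h (modulus U) p.2 p.1| * |Dp h (phase U) p.2 p.1| ^ 2 +
         |Dm h (modulus U) p.2 p.1| * |Dm h (phase U) p.2 p.1| ^ 2) * |phase U p.1 - θ₀|) κ₄)
    (h5 : HasSum (fun i => κ₀ * (modulus U i * |phase U i - θ₀|)) κ₅)
    (h7 : HasSum (fun p : (ℤ × ℤ) × Fin 2 =>
      (|Dp h (modulus U) p.2 p.1| ^ 2 * |Dp h (phase U) p.2 p.1| +
       |Dm h (modulus U) p.2 p.1| ^ 2 * |Dm h (phase U) p.2 p.1|) * |phase U p.1 - θ₀|) κ₇) :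
    ∑' p : (ℤ × ℤ) × Fin 2, ENNReal.ofReal (modulus U p.1 ^ 2 *
        (|Dp h (phase U) p.2 p.1| ^ 2 + |Dm h (phase U) p.2 p.1| ^ 2))
      ≤ ENNReal.ofReal ((κ₃ + 2 * π * κ₄ + 2 * κ₅ + κ₇) * h) := by
  obtain ⟨hAs, hA⟩ := summable_bondIm_mul_and_tsum_le hh hU hM hκ₀ hE h5
  obtain ⟨hRs, hR⟩ := summable_bondRem_mul_and_tsum_le hh θ₀ h3 h4 h7
  rw [tsum_ofReal_sq_mul_eq]
  refine (ENNReal.tsum_ofReal_le_ofReal_of_hasSum (fun p => by positivity) (fun p => ?_)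
    (((hAs.hasSum.mul_left 2).add hRs.hasSum).div_const (h ^ 2))).trans
    (ENNReal.ofReal_le_ofReal ?_)
  · have := sq_add_sq_mul_bondDiff_sq_le (U := U) θ₀ p
    rw [le_div_iff₀ (by positivity)]
    rw [bondDiff_eq hh.ne'] at this ⊢
    linear_combination this
  · rw [div_le_iff₀ (by positivity)]
    linear_combination 2 * hA + hR

end FK

theorem statement1_general
    (h : ℝ) (hh : 0 < h)
    (u : ℤ × ℤ → ℝ) (f LfP LfM : (ℤ × ℤ) → ℝ → ℝ)
    (κ₀P κ₀M : ℝ) (hκ₀P : 0 < κ₀P) (hκ₀M : 0 < κ₀M)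
    (heq : ∀ i : ℤ × ℤ, Lap h u i = f i (u i))
    (hHP : Hplus h u f LfP κ₀P) (hHM : Hminus h u f LfM κ₀M)
    (κ₁P κ₁M : ℝ)
    (hκ₁P : ∀ (i : ℤ × ℤ) (j : Fin 2), |Dp h u j i| ≤ κ₁P)
    (hκ₁M : ∀ (i : ℤ × ℤ) (j : Fin 2), |Dm h u j i| ≤ κ₁M)
    (θinfP θinfM : ℝ)
    (κ₂P κ₃P κ₄P κ₅P κ₆P κ₇P κ₂M κ₃M κ₄M κ₅M κ₆M κ₇M : ℝ)
    (hκ₂P : HasSum (fun p : (ℤ × ℤ) × Fin 2 =>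
      (rhoP h u p.1) ^ 2 *
        (|Dp h (thetaP h u) p.2 p.1| * |Dp h (Dp h (thetaP h u) p.2) p.2 (p.1 - ee p.2)| +
         |Dm h (thetaP h u) p.2 p.1| * |Dm h (Dm h (thetaP h u) p.2) p.2 (p.1 + ee p.2)|)) κ₂P)
    (hκ₃P : HasSum (fun p : (ℤ × ℤ) × Fin 2 =>
      (rhoP h u p.1) ^ 2 *
        (|Dp h (thetaP h u) p.2 p.1| ^ 3 + |Dm h (thetaP h u) p.2 p.1| ^ 3) *
        |thetaP h u p.1 - θinfP|) κ₃P)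
    (hκ₄P : HasSum (fun p : (ℤ × ℤ) × Fin 2 =>
      rhoP h u p.1 *
        (|Dp h (rhoP h u) p.2 p.1| * |Dp h (thetaP h u) p.2 p.1| ^ 2 +
         |Dm h (rhoP h u) p.2 p.1| * |Dm h (thetaP h u) p.2 p.1| ^ 2) *
        |thetaP h u p.1 - θinfP|) κ₄P)
    (hκ₅P : HasSum (fun i : ℤ × ℤ => κ₀P * (rhoP h u i * |thetaP h u i - θinfP|)) κ₅P)
    (hκ₆P : HasSum (fun p : (ℤ × ℤ) × Fin 2 =>
      (|Dp h (fun k => (rhoP h u k) ^ 2) p.2 p.1| * |Dp h (Dp h (thetaP h u) p.2) p.2 p.1| +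
       |Dm h (fun k => (rhoP h u k) ^ 2) p.2 p.1| * |Dm h (Dm h (thetaP h u) p.2) p.2 p.1| +
       h * (rhoP h u p.1) ^ 2 * |Lj h (Lj h (thetaP h u) p.2) p.2 p.1|) *
      |thetaP h u p.1 - θinfP|) κ₆P)
    (hκ₇P : HasSum (fun p : (ℤ × ℤ) × Fin 2 =>
      (|Dp h (rhoP h u) p.2 p.1| ^ 2 * |Dp h (thetaP h u) p.2 p.1| +
       |Dm h (rhoP h u) p.2 p.1| ^ 2 * |Dm h (thetaP h u) p.2 p.1|) *
      |thetaP h u p.1 - θinfP|) κ₇P)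
    (hκ₂M : HasSum (fun p : (ℤ × ℤ) × Fin 2 =>
      (rhoM h u p.1) ^ 2 *
        (|Dp h (thetaM h u) p.2 p.1| * |Dp h (Dp h (thetaM h u) p.2) p.2 (p.1 - ee p.2)| +
         |Dm h (thetaM h u) p.2 p.1| * |Dm h (Dm h (thetaM h u) p.2) p.2 (p.1 + ee p.2)|)) κ₂M)
    (hκ₃M : HasSum (fun p : (ℤ × ℤ) × Fin 2 =>
      (rhoM h u p.1) ^ 2 *
        (|Dp h (thetaM h u) p.2 p.1| ^ 3 + |Dm h (thetaM h u) p.2 p.1| ^ 3) *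
        |thetaM h u p.1 - θinfM|) κ₃M)
    (hκ₄M : HasSum (fun p : (ℤ × ℤ) × Fin 2 =>
      rhoM h u p.1 *
        (|Dp h (rhoM h u) p.2 p.1| * |Dp h (thetaM h u) p.2 p.1| ^ 2 +
         |Dm h (rhoM h u) p.2 p.1| * |Dm h (thetaM h u) p.2 p.1| ^ 2) *
        |thetaM h u p.1 - θinfM|) κ₄M)
    (hκ₅M : HasSum (fun i : ℤ × ℤ => κ₀M * (rhoM h u i * |thetaM h u i - θinfM|)) κ₅M)
    (hκ₆M : HasSum (fun p : (ℤ × ℤ) × Fin 2 =>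
      (|Dp h (fun k => (rhoM h u k) ^ 2) p.2 p.1| * |Dp h (Dp h (thetaM h u) p.2) p.2 p.1| +
       |Dm h (fun k => (rhoM h u k) ^ 2) p.2 p.1| * |Dm h (Dm h (thetaM h u) p.2) p.2 p.1| +
       h * (rhoM h u p.1) ^ 2 * |Lj h (Lj h (thetaM h u) p.2) p.2 p.1|) *
      |thetaM h u p.1 - θinfM|) κ₆M)
    (hκ₇M : HasSum (fun p : (ℤ × ℤ) × Fin 2 =>
      (|Dp h (rhoM h u) p.2 p.1| ^ 2 * |Dp h (thetaM h u) p.2 p.1| +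
       |Dm h (rhoM h u) p.2 p.1| ^ 2 * |Dm h (thetaM h u) p.2 p.1|) *
      |thetaM h u p.1 - θinfM|) κ₇M) :
    (∑' p : (ℤ × ℤ) × Fin 2, ENNReal.ofReal
        ((rhoP h u p.1) ^ 2 *
          (|Dp h (thetaP h u) p.2 p.1| ^ 2 + |Dm h (thetaP h u) p.2 p.1| ^ 2) +
         (rhoM h u p.1) ^ 2 *
          (|Dp h (thetaM h u) p.2 p.1| ^ 2 + |Dm h (thetaM h u) p.2 p.1| ^ 2)))
      ≤ ENNReal.ofReal
          (4 * ((κ₂P + κ₂M) + 2 * Real.exp (2 * π) * (κ₃P + κ₃M) +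
            2 * Real.exp (2 * π) * (κ₄P + κ₄M) + 2 * (κ₅P + κ₅M) +
            (κ₆P + κ₆M) + (κ₇P + κ₇M)) * h) := by
  have hP := tsum_ofReal_modulus_sq_mul_le hh (fivePointLap_Up hh.ne' heq LfP) (norm_Up_le hκ₁P)
    hκ₀P.ne' (norm_fwdDefect_le hh hHP) hκ₃P hκ₄P hκ₅P hκ₇P
  have hM := tsum_ofReal_modulus_sq_mul_le hh (fivePointLap_Um hh.ne' heq LfM) (norm_Um_le hκ₁M)
    hκ₀M.ne' (norm_bwdDefect_le hh hHM) hκ₃M hκ₄M hκ₅M hκ₇M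
  have k₂P := hκ₂P.nonneg fun _ => by positivity
  have k₂M := hκ₂M.nonneg fun _ => by positivity
  have k₃P := hκ₃P.nonneg fun _ => by positivity
  have k₃M := hκ₃M.nonneg fun _ => by positivity
  have k₄P := hκ₄P.nonneg fun _ => by unfold rhoP; positivity
  have k₄M := hκ₄M.nonneg fun _ => by unfold rhoM; positivity
  have k₅P := hκ₅P.nonneg fun _ => by unfold rhoP; positivity
  have k₅M := hκ₅M.nonneg fun _ => by unfold rhoM; positivity
  have k₆P := hκ₆P.nonneg fun _ => by positivity
  have k₆M := hκ₆M.nonneg fun _ => by positivity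
  have k₇P := hκ₇P.nonneg fun _ => by positivity
  have k₇M := hκ₇M.nonneg fun _ => by positivity
  have he : 2 * π + 1 ≤ Real.exp (2 * π) := Real.add_one_le_exp _
  calc _ ≤ _ := ENNReal.tsum_le_tsum fun p => ENNReal.ofReal_add_le
    _ = _ := ENNReal.tsum_add
    _ ≤ _ := add_le_add hP hM
    _ = _ := (ENNReal.ofReal_add (by positivity) (by positivity)).symm
    _ ≤ _ := ENNReal.ofReal_le_ofReal <| by
      rw [← add_mul]
      refine mul_le_mul_of_nonneg_right ?_ hh.le
      nlinarith [mul_le_mul_of_nonneg_right he (add_nonneg k₃P k₃M),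
        mul_le_mul_of_nonneg_right he (add_nonneg k₄P k₄M), Real.pi_pos]

/-- Theorem 1.2 / `DGDG-GE` of the paper.  Quantitative rigidity estimate
for both forward and backward increments. -/
theorem statement1
    (h : ℝ) (hh : 0 < h)
    (u : ℤ × ℤ → ℝ) (f LfP LfM : (ℤ × ℤ) → ℝ → ℝ)
    (κ₀P κ₀M : ℝ) (hκ₀P : 0 < κ₀P) (hκ₀M : 0 < κ₀M)
    (heq : ∀ i : ℤ × ℤ, Lap h u i = f i (u i))
    (hHP : Hplus h u f LfP κ₀P) (hHM : Hminus h u f LfM κ₀M)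
    (hndP : NondegP u) (hndM : NondegM u)
    (κ₁P κ₁M : ℝ)
    (hκ₁P : ∀ (i : ℤ × ℤ) (j : Fin 2), |Dp h u j i| ≤ κ₁P)
    (hκ₁M : ∀ (i : ℤ × ℤ) (j : Fin 2), |Dm h u j i| ≤ κ₁M)
    (θinfP θinfM : ℝ)
    (hθinfP : θinfP ∈ Set.Ioc (-π) π) (hθinfM : θinfM ∈ Set.Ioc (-π) π)
    (κ₂P κ₃P κ₄P κ₅P κ₆P κ₇P κ₂M κ₃M κ₄M κ₅M κ₆M κ₇M : ℝ)
    (hκ₂P : HasSum (fun p : (ℤ × ℤ) × Fin 2 =>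
      (rhoP h u p.1) ^ 2 *
        (|Dp h (thetaP h u) p.2 p.1| * |Dp h (Dp h (thetaP h u) p.2) p.2 (p.1 - ee p.2)| +
         |Dm h (thetaP h u) p.2 p.1| * |Dm h (Dm h (thetaP h u) p.2) p.2 (p.1 + ee p.2)|)) κ₂P)
    (hκ₃P : HasSum (fun p : (ℤ × ℤ) × Fin 2 =>
      (rhoP h u p.1) ^ 2 *
        (|Dp h (thetaP h u) p.2 p.1| ^ 3 + |Dm h (thetaP h u) p.2 p.1| ^ 3) *
        |thetaP h u p.1 - θinfP|) κ₃P)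
    (hκ₄P : HasSum (fun p : (ℤ × ℤ) × Fin 2 =>
      rhoP h u p.1 *
        (|Dp h (rhoP h u) p.2 p.1| * |Dp h (thetaP h u) p.2 p.1| ^ 2 +
         |Dm h (rhoP h u) p.2 p.1| * |Dm h (thetaP h u) p.2 p.1| ^ 2) *
        |thetaP h u p.1 - θinfP|) κ₄P)
    (hκ₅P : HasSum (fun i : ℤ × ℤ => κ₀P * (rhoP h u i * |thetaP h u i - θinfP|)) κ₅P)
    (hκ₆P : HasSum (fun p : (ℤ × ℤ) × Fin 2 =>
      (|Dp h (fun k => (rhoP h u k) ^ 2) p.2 p.1| * |Dp h (Dp h (thetaP h u) p.2) p.2 p.1| +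
       |Dm h (fun k => (rhoP h u k) ^ 2) p.2 p.1| * |Dm h (Dm h (thetaP h u) p.2) p.2 p.1| +
       h * (rhoP h u p.1) ^ 2 * |Lj h (Lj h (thetaP h u) p.2) p.2 p.1|) *
      |thetaP h u p.1 - θinfP|) κ₆P)
    (hκ₇P : HasSum (fun p : (ℤ × ℤ) × Fin 2 =>
      (|Dp h (rhoP h u) p.2 p.1| ^ 2 * |Dp h (thetaP h u) p.2 p.1| +
       |Dm h (rhoP h u) p.2 p.1| ^ 2 * |Dm h (thetaP h u) p.2 p.1|) *
      |thetaP h u p.1 - θinfP|) κ₇P)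
    (hκ₂M : HasSum (fun p : (ℤ × ℤ) × Fin 2 =>
      (rhoM h u p.1) ^ 2 *
        (|Dp h (thetaM h u) p.2 p.1| * |Dp h (Dp h (thetaM h u) p.2) p.2 (p.1 - ee p.2)| +
         |Dm h (thetaM h u) p.2 p.1| * |Dm h (Dm h (thetaM h u) p.2) p.2 (p.1 + ee p.2)|)) κ₂M)
    (hκ₃M : HasSum (fun p : (ℤ × ℤ) × Fin 2 =>
      (rhoM h u p.1) ^ 2 *
        (|Dp h (thetaM h u) p.2 p.1| ^ 3 + |Dm h (thetaM h u) p.2 p.1| ^ 3) *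
        |thetaM h u p.1 - θinfM|) κ₃M)
    (hκ₄M : HasSum (fun p : (ℤ × ℤ) × Fin 2 =>
      rhoM h u p.1 *
        (|Dp h (rhoM h u) p.2 p.1| * |Dp h (thetaM h u) p.2 p.1| ^ 2 +
         |Dm h (rhoM h u) p.2 p.1| * |Dm h (thetaM h u) p.2 p.1| ^ 2) *
        |thetaM h u p.1 - θinfM|) κ₄M)
    (hκ₅M : HasSum (fun i : ℤ × ℤ => κ₀M * (rhoM h u i * |thetaM h u i - θinfM|)) κ₅M)
    (hκ₆M : HasSum (fun p : (ℤ × ℤ) × Fin 2 =>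
      (|Dp h (fun k => (rhoM h u k) ^ 2) p.2 p.1| * |Dp h (Dp h (thetaM h u) p.2) p.2 p.1| +
       |Dm h (fun k => (rhoM h u k) ^ 2) p.2 p.1| * |Dm h (Dm h (thetaM h u) p.2) p.2 p.1| +
       h * (rhoM h u p.1) ^ 2 * |Lj h (Lj h (thetaM h u) p.2) p.2 p.1|) *
      |thetaM h u p.1 - θinfM|) κ₆M)
    (hκ₇M : HasSum (fun p : (ℤ × ℤ) × Fin 2 =>
      (|Dp h (rhoM h u) p.2 p.1| ^ 2 * |Dp h (thetaM h u) p.2 p.1| +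
       |Dm h (rhoM h u) p.2 p.1| ^ 2 * |Dm h (thetaM h u) p.2 p.1|) *
      |thetaM h u p.1 - θinfM|) κ₇M) :
    (∑' p : (ℤ × ℤ) × Fin 2, ENNReal.ofReal
        ((rhoP h u p.1) ^ 2 *
          (|Dp h (thetaP h u) p.2 p.1| ^ 2 + |Dm h (thetaP h u) p.2 p.1| ^ 2) +
         (rhoM h u p.1) ^ 2 *
          (|Dp h (thetaM h u) p.2 p.1| ^ 2 + |Dm h (thetaM h u) p.2 p.1| ^ 2)))
      ≤ ENNReal.ofReal
          (4 * ((κ₂P + κ₂M) + 2 * Real.exp (2 * π) * (κ₃P + κ₃M) +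
            2 * Real.exp (2 * π) * (κ₄P + κ₄M) + 2 * (κ₅P + κ₅M) +
            (κ₆P + κ₆M) + (κ₇P + κ₇M)) * h) :=
  statement1_general h hh u f LfP LfM κ₀P κ₀M hκ₀P hκ₀M heq hHP hHM κ₁P κ₁M hκ₁P hκ₁M θinfP θinfM
    κ₂P κ₃P κ₄P κ₅P κ₆P κ₇P κ₂M κ₃M κ₄M κ₅M κ₆M κ₇M hκ₂P hκ₃P hκ₄P hκ₅P hκ₆P hκ₇P hκ₂M hκ₃M hκ₄M
    hκ₅M hκ₆M hκ₇M
end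
end

section
/- Let h > 0 and let u : ℤ² → ℝ satisfy D₂⁺u_i ≠ 0 and D₂⁻u_i ≠ 0 for all i ∈ ℤ², and suppose that Σ_{i∈ℤ², j∈{1,2}} [ (ρ_i⁺)²( |Dⱼ⁺ϑ_i⁺|² + |Dⱼ⁻ϑ_i⁺|² ) + (ρ_i⁻)²( |Dⱼ⁺ϑ_i⁻|² + |Dⱼ⁻ϑ_i⁻|² ) ] = 0. Then there exist ũ : ℤ → ℝ and real numbers c⁺, c⁻ such that, for every k, m ∈ ℤ, u_{(k,m)} = Σ_{j=0}^{|k|} C(|k|, j) · (c^{σ_k})^j · (1 − c^{σ_k})^{|k|−j} · ũ_{m + σ_k·j}, where σ_k = + if k > 0, σ_k = − if k < 0, and for k = 0 the right-hand side is ũ_m; moreover (u_{i±e₁} − u_i)/(u_{i±e₂} − u_i) = c^± for all i ∈ ℤ². -/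
noncomputable section

open Real

open FK Finset

/-!
The weights ρ⁺, ρ⁻ are positive because D₂^± u never vanishes, so zero energy forces the forward
differences of ϑ⁺ and ϑ⁻ to vanish: both angles are constant on ℤ². Since
cot ϑ⁺ = D₁⁺u / D₂⁺u = (u_{i+e₁} − u_i) / (u_{i+e₂} − u_i), this ratio is a constant c⁺, i.e.
u(k+1, m) = c⁺ u(k, m+1) + (1 − c⁺) u(k, m), and likewise backwards with c⁻. Iterating this
two-term recurrence from the column k = 0 yields the binomial formula with ũ = u(0, ·).
-/

theorem Complex.re_div_im_eq_cos_arg_div_sin_arg (z : ℂ) :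
    z.re / z.im = Real.cos z.arg / Real.sin z.arg := by
  rcases eq_or_ne z 0 with rfl | hz
  · simp
  rw [Complex.cos_arg hz, Complex.sin_arg, div_div_div_cancel_right₀ (by simpa using hz)]

theorem eq_zero_of_weighted_sum_sq_nonpos {r s a b c d : ℝ} (hr : r ≠ 0) (hs : s ≠ 0)
    (hle : r ^ 2 * (|a| ^ 2 + |b| ^ 2) + s ^ 2 * (|c| ^ 2 + |d| ^ 2) ≤ 0) : a = 0 ∧ c = 0 := by
  have ha : r ^ 2 * a ^ 2 = 0 := by
    refine le_antisymm ?_ (by positivity)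
    nlinarith [sq_abs a, sq_abs b, sq_abs c, sq_abs d, sq_nonneg (r * b), sq_nonneg (s * c),
      sq_nonneg (s * d)]
  have hc : s ^ 2 * c ^ 2 = 0 := by
    refine le_antisymm ?_ (by positivity)
    nlinarith [sq_abs a, sq_abs b, sq_abs c, sq_abs d, sq_nonneg (r * a), sq_nonneg (r * b),
      sq_nonneg (s * d)]
  simp_all

theorem eq_add_mul_sub_of_sub_div_sub_eq {K : Type*} [Field K] {a b x c : K} (hb : b - x ≠ 0)
    (h : (a - x) / (b - x) = c) : a = c * b + (1 - c) * x := by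
  rw [div_eq_iff hb] at h
  linear_combination h

theorem eq_sum_choose_of_recurrence {R : Type*} [CommRing R] (c : R) (s : ℤ) (u : ℤ × ℤ → R)
    (hrec : ∀ k m, u (k + s, m) = c * u (k, m + s) + (1 - c) * u (k, m)) (n : ℕ) (m : ℤ) :
    u (s * n, m) = ∑ j ∈ range (n + 1),
      (n.choose j : R) * c ^ j * (1 - c) ^ (n - j) * u (0, m + s * j) := by
  induction n generalizing m with
  | zero => simp
  | succ n ih =>
    have pascal := sum_choose_succ_mul (fun i k => c ^ i * (1 - c) ^ k * u (0, m + s * i)) n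
    simp only [← mul_assoc] at pascal
    rw [pascal, Nat.cast_succ, mul_add_one, hrec, ih, ih, mul_sum, mul_sum, add_comm]
    congr 1 <;> refine sum_congr rfl fun j hj => ?_
    · rw [Nat.sub_add_comm (mem_range_succ_iff.mp hj)]
      ring
    · push_cast
      ring_nf

namespace FK

theorem ee_zero : ee 0 = (1, 0) := rfl

theorem ee_one : ee 1 = (0, 1) := rfl

theorem eq_of_add_ee_eq {α : Type*} {g : ℤ × ℤ → α} (hg : ∀ j i, g (i + ee j) = g i)
    (i : ℤ × ℤ) : g i = g 0 := by
  have h₀ : Function.Periodic g (1, 0) := hg 0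
  have h₁ : Function.Periodic g (0, 1) := hg 1
  calc g i = g (0 + i.1 • (1, 0) + i.2 • (0, 1)) := by simp
    _ = g 0 := by rw [h₁.zsmul, h₀.zsmul]

variable {h : ℝ} {u : ℤ × ℤ → ℝ}

theorem add_ee_eq_of_Dp_eq_zero (hh : h ≠ 0) {v : ℤ × ℤ → ℝ} {j : Fin 2} {i : ℤ × ℤ}
    (hv : Dp h v j i = 0) : v (i + ee j) = v i :=
  sub_eq_zero.mp ((div_eq_zero_iff.mp hv).resolve_right hh)

@[simp] theorem Up_re (i : ℤ × ℤ) : (Up h u i).re = Dp h u 0 i := by simp [Up]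

@[simp] theorem Up_im (i : ℤ × ℤ) : (Up h u i).im = Dp h u 1 i := by simp [Up]

@[simp] theorem Um_re (i : ℤ × ℤ) : (Um h u i).re = Dm h u 0 i := by simp [Um]

@[simp] theorem Um_im (i : ℤ × ℤ) : (Um h u i).im = Dm h u 1 i := by simp [Um]

theorem rhoP_ne_zero {i : ℤ × ℤ} (hi : Dp h u 1 i ≠ 0) : rhoP h u i ≠ 0 :=
  norm_ne_zero_iff.mpr fun h0 => hi (by simpa using congrArg Complex.im h0)

theorem rhoM_ne_zero {i : ℤ × ℤ} (hi : Dm h u 1 i ≠ 0) : rhoM h u i ≠ 0 :=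
  norm_ne_zero_iff.mpr fun h0 => hi (by simpa using congrArg Complex.im h0)

theorem forward_ratio_eq (hh : h ≠ 0) (i : ℤ × ℤ) :
    (u (i + ee 0) - u i) / (u (i + ee 1) - u i) = cos (thetaP h u i) / sin (thetaP h u i) := by
  rw [thetaP, ← Complex.re_div_im_eq_cos_arg_div_sin_arg, Up_re, Up_im, Dp, Dp,
    div_div_div_cancel_right₀ hh]

theorem backward_ratio_eq (hh : h ≠ 0) (i : ℤ × ℤ) :
    (u (i - ee 0) - u i) / (u (i - ee 1) - u i) = cos (thetaM h u i) / sin (thetaM h u i) := by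
  rw [thetaM, ← Complex.re_div_im_eq_cos_arg_div_sin_arg, Um_re, Um_im, Dm, Dm,
    div_div_div_cancel_right₀ hh, ← neg_sub, ← neg_sub (u i), neg_div_neg_eq]

theorem forward_recurrence {c : ℝ} (hd2p : ∀ i, Dp h u 1 i ≠ 0)
    (hc : ∀ i, (u (i + ee 0) - u i) / (u (i + ee 1) - u i) = c) (k m : ℤ) :
    u (k + 1, m) = c * u (k, m + 1) + (1 - c) * u (k, m) := by
  have hb : u ((k, m) + ee 1) - u (k, m) ≠ 0 := (div_ne_zero_iff.mp (hd2p (k, m))).1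
  simpa [ee_zero, ee_one] using eq_add_mul_sub_of_sub_div_sub_eq hb (hc (k, m))

theorem backward_recurrence {c : ℝ} (hd2m : ∀ i, Dm h u 1 i ≠ 0)
    (hc : ∀ i, (u (i - ee 0) - u i) / (u (i - ee 1) - u i) = c) (k m : ℤ) :
    u (k + -1, m) = c * u (k, m + -1) + (1 - c) * u (k, m) := by
  have hb : u ((k, m) - ee 1) - u (k, m) ≠ 0 := by
    rw [← neg_sub]
    exact neg_ne_zero.mpr (div_ne_zero_iff.mp (hd2m (k, m))).1
  simpa [ee_zero, ee_one, ← sub_eq_add_neg] using eq_add_mul_sub_of_sub_div_sub_eq hb (hc (k, m))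

end FK

/-- Lemma 1.3 / `KK-1D` of the paper.  One-dimensional reconstruction of
functions whose angular energy vanishes identically. -/
theorem statement3
    (h : ℝ) (hh : 0 < h) (u : ℤ × ℤ → ℝ)
    (hd2p : ∀ i : ℤ × ℤ, Dp h u 1 i ≠ 0)
    (hd2m : ∀ i : ℤ × ℤ, Dm h u 1 i ≠ 0)
    (hzero : (∑' p : (ℤ × ℤ) × Fin 2, ENNReal.ofReal
        ((rhoP h u p.1) ^ 2 *
          (|Dp h (thetaP h u) p.2 p.1| ^ 2 + |Dm h (thetaP h u) p.2 p.1| ^ 2) +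
         (rhoM h u p.1) ^ 2 *
          (|Dp h (thetaM h u) p.2 p.1| ^ 2 + |Dm h (thetaM h u) p.2 p.1| ^ 2))) = 0) :
    ∃ (util : ℤ → ℝ) (cp cm : ℝ),
      (∀ k m : ℤ,
        u (k, m) = ∑ j ∈ Finset.range (k.natAbs + 1),
          (Nat.choose k.natAbs j : ℝ) *
            (if 0 < k then cp else if k < 0 then cm else 1) ^ j *
            (1 - (if 0 < k then cp else if k < 0 then cm else 1)) ^ (k.natAbs - j) *
            util (m + k.sign * (j : ℤ))) ∧
      (∀ i : ℤ × ℤ,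
        (u (i + ee 0) - u i) / (u (i + ee 1) - u i) = cp ∧
        (u (i - ee 0) - u i) / (u (i - ee 1) - u i) = cm) := by
  have hflat (j : Fin 2) (i : ℤ × ℤ) : Dp h (thetaP h u) j i = 0 ∧ Dp h (thetaM h u) j i = 0 :=
    eq_zero_of_weighted_sum_sq_nonpos (rhoP_ne_zero (hd2p i)) (rhoM_ne_zero (hd2m i))
      (ENNReal.ofReal_eq_zero.mp (ENNReal.tsum_eq_zero.mp hzero (i, j)))
  have hP := eq_of_add_ee_eq fun j i => add_ee_eq_of_Dp_eq_zero hh.ne' (hflat j i).1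
  have hM := eq_of_add_ee_eq fun j i => add_ee_eq_of_Dp_eq_zero hh.ne' (hflat j i).2
  obtain ⟨cp, hcp⟩ : ∃ c, ∀ i, (u (i + ee 0) - u i) / (u (i + ee 1) - u i) = c :=
    ⟨_, fun i => (forward_ratio_eq hh.ne' i).trans (by rw [hP i])⟩
  obtain ⟨cm, hcm⟩ : ∃ c, ∀ i, (u (i - ee 0) - u i) / (u (i - ee 1) - u i) = c :=
    ⟨_, fun i => (backward_ratio_eq hh.ne' i).trans (by rw [hM i])⟩
  refine ⟨fun m => u (0, m), cp, cm, fun k m => ?_, fun i => ⟨hcp i, hcm i⟩⟩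
  rcases lt_trichotomy k 0 with hk | rfl | hk
  · have := eq_sum_choose_of_recurrence cm (-1) u (backward_recurrence hd2m hcm) k.natAbs m
    simpa [hk, hk.not_gt, Int.sign_eq_neg_one_of_neg hk, abs_of_neg hk] using this
  · simp
  · have := eq_sum_choose_of_recurrence cp 1 u (forward_recurrence hd2p hcp) k.natAbs m
    simpa [hk, Int.sign_eq_one_of_pos hk, abs_of_pos hk] using this
end
end

section
/- Let h > 0 and let u : ℤ² → ℝ solve Lu_i = f(i, u_i) for all i ∈ ℤ², where f satisfies the structural condition (H⁺) with data L_f⁺, κ₀⁺, and assume the nondegeneracy condition. Then for every i ∈ ℤ², | Σ_{j=1,2} ( Dⱼ⁺((ρ⁺)²Dⱼ⁺ϑ⁺)_i + Dⱼ⁻((ρ⁺)²Dⱼ⁻ϑ⁺)_i ) | ≤ 2e^{2π}h·Σ_{j=1,2}(ρ_i⁺)²( |Dⱼ⁺ϑ_i⁺|³ + |Dⱼ⁻ϑ_i⁺|³ ) + 2e^{2π}h·Σ_{j=1,2} ρ_i⁺( |Dⱼ⁺ρ_i⁺|·|Dⱼ⁺ϑ_i⁺|² + |Dⱼ⁻ρ_i⁺|·|Dⱼ⁻ϑ_i⁺|²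 ) + 2κ₀⁺·h·ρ_i⁺ + h·Σ_{j=1,2}( |Dⱼ⁺((ρ⁺)²)_i|·|Dⱼ⁺(Dⱼ⁺ϑ⁺)_i| + |Dⱼ⁻((ρ⁺)²)_i|·|Dⱼ⁻(Dⱼ⁻ϑ⁺)_i| + h·(ρ_i⁺)²·|Lⱼ(Lⱼϑ⁺)_i| ) + h·Σ_{j=1,2}( |Dⱼ⁺ρ_i⁺|²·|Dⱼ⁺ϑ_i⁺| + |Dⱼ⁻ρ_i⁺|²·|Dⱼ⁻ϑ_i⁺| ). -/
noncomputable section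

open Real

open FK

/-! Write `Uᵢ = ρᵢ e^{iϑᵢ}`. Replacing each angle increment `ϑᵢ₊ₑ − ϑᵢ` by its sine turns
`ρᵢ ρᵢ₊ₑ (ϑᵢ₊ₑ − ϑᵢ)` into the cross product `Uᵢ × Uᵢ₊ₑ`. The discrete divergence of these
cross products is `Uᵢ × D⁺(Lu)ᵢ = Uᵢ × D⁺f(·, u)ᵢ`, and by (H⁺) this is `Uᵢ × (L_f Uᵢ) = 0` up to
`κ₀ h ρᵢ`. What the replacement costs is controlled by `|sin x − x| ≤ |x|³/6` with `|x| ≤ 2π`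
(arguments lie in `(−π, π]`); everything else is an exact discrete product rule. -/

theorem Complex.norm_mul_norm_mul_sin_arg_sub (z w : ℂ) :
    ‖z‖ * ‖w‖ * Real.sin (w.arg - z.arg) = z.re * w.im - z.im * w.re := by
  rw [Real.sin_sub, ← norm_mul_cos_arg z, ← norm_mul_sin_arg z, ← norm_mul_cos_arg w,
    ← norm_mul_sin_arg w]
  ring

theorem two_mul_sin_remainder_le {h r₀ r₁ d a : ℝ} (hh : 0 < h) (hr₀ : 0 ≤ r₀)
    (hr₁ : 0 ≤ r₁) (hr₁d : r₁ ≤ r₀ + h * |d|) (ha : h * |a| ≤ 2 * π) :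
    |2 * r₀ * r₁ * (sin (h * a) - h * a) / h ^ 2| ≤
      2 * exp (2 * π) * h * (r₀ ^ 2 * |a| ^ 3 + r₀ * |d| * |a| ^ 2) := by
  have hsin : |sin (h * a) - h * a| ≤ h ^ 3 * |a| ^ 3 / 6 := by
    simpa [abs_sub_comm, abs_mul, mul_pow, abs_of_pos hh] using abs_sub_sin_le (h * a)
  -- `1/3` and `2π/3` suffice in place of `2 e^{2π}`
  have hexp : 1 + 2 * π ≤ exp (2 * π) := by linarith [add_one_le_exp (2 * π)]
  calc |2 * r₀ * r₁ * (sin (h * a) - h * a) / h ^ 2|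
      = 2 * r₀ * r₁ * |sin (h * a) - h * a| / h ^ 2 := by
        rw [abs_div, abs_mul, abs_mul, abs_mul, abs_of_pos (by positivity : (0 : ℝ) < h ^ 2),
          abs_of_nonneg hr₀, abs_of_nonneg hr₁, abs_two]
    _ ≤ 2 * r₀ * (r₀ + h * |d|) * (h ^ 3 * |a| ^ 3 / 6) / h ^ 2 := by gcongr
    _ = h * (r₀ ^ 2 * |a| ^ 3) / 3 + (h * |a|) * (h * (r₀ * |d| * |a| ^ 2)) / 3 := by
        field_simp; ring
    _ ≤ h * (r₀ ^ 2 * |a| ^ 3) / 3 + (2 * π) * (h * (r₀ * |d| * |a| ^ 2)) / 3 := by gcongr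
    _ ≤ _ := by
        nlinarith [pi_pos, (by positivity : 0 ≤ h * (r₀ ^ 2 * |a| ^ 3)),
          (by positivity : 0 ≤ h * (r₀ * |d| * |a| ^ 2))]

namespace FK

variable {h : ℝ}

theorem mul_Dp (hh : h ≠ 0) (v : ℤ × ℤ → ℝ) (j : Fin 2) (i : ℤ × ℤ) :
    h * Dp h v j i = v (i + ee j) - v i :=
  mul_div_cancel₀ _ hh

theorem mul_Dm (hh : h ≠ 0) (v : ℤ × ℤ → ℝ) (j : Fin 2) (i : ℤ × ℤ) :
    h * Dm h v j i = v i - v (i - ee j) :=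
  mul_div_cancel₀ _ hh

theorem mul_abs_Dp (hh : 0 < h) (v : ℤ × ℤ → ℝ) (j : Fin 2) (i : ℤ × ℤ) :
    h * |Dp h v j i| = |v (i + ee j) - v i| := by
  rw [← mul_Dp hh.ne', abs_mul, abs_of_pos hh]

theorem mul_abs_Dm (hh : 0 < h) (v : ℤ × ℤ → ℝ) (j : Fin 2) (i : ℤ × ℤ) :
    h * |Dm h v j i| = |v i - v (i - ee j)| := by
  rw [← mul_Dm hh.ne', abs_mul, abs_of_pos hh]

-- Approximates `ρ² Dⱼ⁺ϑ`; for `ρ = rhoP`, `ϑ = thetaP` it is `(Uₖ × Uₖ₊ₑ) / h`.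
def sineFlux (h : ℝ) (ρ θ : ℤ × ℤ → ℝ) (j : Fin 2) (k : ℤ × ℤ) : ℝ :=
  ρ k * ρ (k + ee j) * sin (θ (k + ee j) - θ k) / h

theorem divergence_sub_two_Dm_sineFlux_eq (hh : h ≠ 0) (ρ θ : ℤ × ℤ → ℝ) (j : Fin 2)
    (i : ℤ × ℤ) :
    Dp h (fun k => ρ k ^ 2 * Dp h θ j k) j i + Dm h (fun k => ρ k ^ 2 * Dm h θ j k) j i -
        2 * Dm h (sineFlux h ρ θ j) j i =
      h * (Dp h (fun k => ρ k ^ 2) j i * Dp h (Dp h θ j) j i -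
          Dm h (fun k => ρ k ^ 2) j i * Dm h (Dm h θ j) j i) +
        h ^ 2 * ρ i ^ 2 * Lj h (Lj h θ j) j i +
        h * (Dp h ρ j i ^ 2 * Dp h θ j i - Dm h ρ j i ^ 2 * Dm h θ j i) -
        2 * ρ i * ρ (i + ee j) * (sin (h * Dp h θ j i) - h * Dp h θ j i) / h ^ 2 +
        2 * ρ i * ρ (i - ee j) * (sin (h * Dm h θ j i) - h * Dm h θ j i) / h ^ 2 := by
  rw [mul_Dp hh, mul_Dm hh]
  simp only [Dp, Dm, Lj, sineFlux, add_sub_cancel_right, sub_add_cancel]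
  field_simp
  ring

theorem abs_divergence_sub_two_Dm_sineFlux_le (hh : 0 < h) {ρ θ : ℤ × ℤ → ℝ}
    (hρ : ∀ k, 0 ≤ ρ k) (j : Fin 2) (i : ℤ × ℤ) (hθp : |θ (i + ee j) - θ i| ≤ 2 * π)
    (hθm : |θ i - θ (i - ee j)| ≤ 2 * π) :
    |Dp h (fun k => ρ k ^ 2 * Dp h θ j k) j i + Dm h (fun k => ρ k ^ 2 * Dm h θ j k) j i -
        2 * Dm h (sineFlux h ρ θ j) j i| ≤
      2 * exp (2 * π) * h * (ρ i ^ 2 * (|Dp h θ j i| ^ 3 + |Dm h θ j i| ^ 3)) +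
        2 * exp (2 * π) * h *
          (ρ i * (|Dp h ρ j i| * |Dp h θ j i| ^ 2 + |Dm h ρ j i| * |Dm h θ j i| ^ 2)) +
        h * (|Dp h (fun k => ρ k ^ 2) j i| * |Dp h (Dp h θ j) j i| +
          |Dm h (fun k => ρ k ^ 2) j i| * |Dm h (Dm h θ j) j i| +
          h * ρ i ^ 2 * |Lj h (Lj h θ j) j i|) +
        h * (|Dp h ρ j i| ^ 2 * |Dp h θ j i| + |Dm h ρ j i| ^ 2 * |Dm h θ j i|) := by
  rw [divergence_sub_two_Dm_sineFlux_eq hh.ne']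
  have hsinp := two_mul_sin_remainder_le hh (hρ i) (hρ (i + ee j))
    (d := Dp h ρ j i) (by rw [mul_abs_Dp hh]; linarith [le_abs_self (ρ (i + ee j) - ρ i)])
    (by rwa [mul_abs_Dp hh])
  have hsinm := two_mul_sin_remainder_le hh (hρ i) (hρ (i - ee j))
    (d := Dm h ρ j i) (by rw [mul_abs_Dm hh]; linarith [neg_abs_le (ρ i - ρ (i - ee j))])
    (by rwa [mul_abs_Dm hh])
  have hprod : |h * (Dp h (fun k => ρ k ^ 2) j i * Dp h (Dp h θ j) j i -
      Dm h (fun k => ρ k ^ 2) j i * Dm h (Dm h θ j) j i)| ≤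
      h * (|Dp h (fun k => ρ k ^ 2) j i| * |Dp h (Dp h θ j) j i| +
        |Dm h (fun k => ρ k ^ 2) j i| * |Dm h (Dm h θ j) j i|) := by
    rw [abs_mul, abs_of_pos hh, ← abs_mul, ← abs_mul]
    gcongr
    exact abs_sub _ _
  have hbilap :
      |h ^ 2 * ρ i ^ 2 * Lj h (Lj h θ j) j i| = h * (h * ρ i ^ 2 * |Lj h (Lj h θ j) j i|) := by
    rw [abs_mul, abs_mul, abs_pow, abs_pow, abs_of_pos hh, abs_of_nonneg (hρ i)]
    ring
  have hcubic : |h * (Dp h ρ j i ^ 2 * Dp h θ j i - Dm h ρ j i ^ 2 * Dm h θ j i)| ≤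
      h * (|Dp h ρ j i| ^ 2 * |Dp h θ j i| + |Dm h ρ j i| ^ 2 * |Dm h θ j i|) := by
    rw [abs_mul, abs_of_pos hh]
    gcongr
    refine (abs_sub _ _).trans_eq ?_
    rw [abs_mul, abs_mul, abs_pow, abs_pow]
  rw [abs_le] at hprod hcubic hsinp hsinm ⊢
  have hbilap' := abs_le.mp hbilap.le
  constructor <;> linarith

variable {u : ℤ × ℤ → ℝ}

theorem abs_Dp_le_rhoP (j : Fin 2) (i : ℤ × ℤ) : |Dp h u j i| ≤ rhoP h u i := by
  fin_cases j
  · simpa [rhoP, Up] using Complex.abs_re_le_norm (Up h u i)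
  · simpa [rhoP, Up] using Complex.abs_im_le_norm (Up h u i)

theorem abs_thetaP_sub_le (k k' : ℤ × ℤ) : |thetaP h u k - thetaP h u k'| ≤ 2 * π :=
  (abs_sub _ _).trans <| (add_le_add (Complex.abs_arg_le_pi _) (Complex.abs_arg_le_pi _)).trans_eq
    (two_mul π).symm

theorem sineFlux_rhoP_thetaP (j : Fin 2) (k : ℤ × ℤ) :
    sineFlux h (rhoP h u) (thetaP h u) j k =
      (Dp h u 0 k * Dp h u 1 (k + ee j) - Dp h u 1 k * Dp h u 0 (k + ee j)) / h := by
  simp [sineFlux, rhoP, thetaP, Complex.norm_mul_norm_mul_sin_arg_sub, Up]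

-- Discrete form of `div (ρ² ∇ϑ) = U × ∇(Δu)`; the terms `U_i × U_i` cancel.
theorem sum_Dm_sineFlux_eq (hh : h ≠ 0) (i : ℤ × ℤ) :
    ∑ j : Fin 2, Dm h (sineFlux h (rhoP h u) (thetaP h u) j) j i =
      Dp h u 0 i * Dp h (Lap h u) 1 i - Dp h u 1 i * Dp h (Lap h u) 0 i := by
  simp only [Fin.sum_univ_two, Dm, sineFlux_rhoP_thetaP, Lap, Lj, Dp, sub_add_cancel,
    add_sub_cancel_right, sub_add_eq_add_sub, add_right_comm i (ee 1) (ee 0)]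
  field_simp
  ring

theorem abs_sum_Dm_sineFlux_le (hh : 0 < h) {f Lf : ℤ × ℤ → ℝ → ℝ} {κ₀ : ℝ}
    (heq : ∀ i, Lap h u i = f i (u i)) (hH : Hplus h u f Lf κ₀) (i : ℤ × ℤ) :
    |∑ j : Fin 2, Dm h (sineFlux h (rhoP h u) (thetaP h u) j) j i| ≤ κ₀ * h * rhoP h u i := by
  set η : Fin 2 → ℝ := fun j =>
    f (i + ee j) (u (i + ee j)) - f i (u i) - Lf i (u i) * (u (i + ee j) - u i)
  have hDLap (j : Fin 2) : Dp h (Lap h u) j i = η j / h + Lf i (u i) * Dp h u j i := by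
    simp only [η, Dp, heq]
    ring
  have hcross : Dp h u 0 i * Dp h (Lap h u) 1 i - Dp h u 1 i * Dp h (Lap h u) 0 i =
      (Dp h u 0 i * η 1 - Dp h u 1 i * η 0) / h := by
    rw [hDLap, hDLap]
    ring
  have hη := hH i
  simp only [Fin.sum_univ_two] at hη
  rw [sum_Dm_sineFlux_eq hh.ne', hcross, abs_div, abs_of_pos hh]
  calc |Dp h u 0 i * η 1 - Dp h u 1 i * η 0| / h
      ≤ (rhoP h u i * |η 1| + rhoP h u i * |η 0|) / h := by
        gcongr
        refine (abs_sub _ _).trans ?_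
        rw [abs_mul, abs_mul]
        gcongr <;> exact abs_Dp_le_rhoP _ _
    _ = rhoP h u i * (|η 0| / h + |η 1| / h) := by ring
    _ ≤ rhoP h u i * (κ₀ * h) := by gcongr; exact norm_nonneg _
    _ = κ₀ * h * rhoP h u i := by ring

end FK

theorem statement8_general
    (h : ℝ) (hh : 0 < h)
    (u : ℤ × ℤ → ℝ) (f Lf : (ℤ × ℤ) → ℝ → ℝ) (κ₀ : ℝ)
    (heq : ∀ i : ℤ × ℤ, Lap h u i = f i (u i))
    (hH : Hplus h u f Lf κ₀) :
    ∀ i : ℤ × ℤ,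
      |∑ j : Fin 2,
          (Dp h (fun k => (rhoP h u k) ^ 2 * Dp h (thetaP h u) j k) j i +
           Dm h (fun k => (rhoP h u k) ^ 2 * Dm h (thetaP h u) j k) j i)|
        ≤ 2 * Real.exp (2 * π) * h *
            (∑ j : Fin 2, (rhoP h u i) ^ 2 *
              (|Dp h (thetaP h u) j i| ^ 3 + |Dm h (thetaP h u) j i| ^ 3)) +
          2 * Real.exp (2 * π) * h *
            (∑ j : Fin 2, rhoP h u i *
              (|Dp h (rhoP h u) j i| * |Dp h (thetaP h u) j i| ^ 2 +
               |Dm h (rhoP h u) j i| * |Dm h (thetaP h u) j i| ^ 2)) +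
          2 * κ₀ * h * rhoP h u i +
          h * (∑ j : Fin 2,
            (|Dp h (fun k => (rhoP h u k) ^ 2) j i| * |Dp h (Dp h (thetaP h u) j) j i| +
             |Dm h (fun k => (rhoP h u k) ^ 2) j i| * |Dm h (Dm h (thetaP h u) j) j i| +
             h * (rhoP h u i) ^ 2 * |Lj h (Lj h (thetaP h u) j) j i|)) +
          h * (∑ j : Fin 2,
            (|Dp h (rhoP h u) j i| ^ 2 * |Dp h (thetaP h u) j i| +
             |Dm h (rhoP h u) j i| ^ 2 * |Dm h (thetaP h u) j i|)) := by
  intro i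
  have hflux := abs_sum_Dm_sineFlux_le hh heq hH i
  have hdir (j : Fin 2) :=
    abs_divergence_sub_two_Dm_sineFlux_le hh (ρ := rhoP h u) (θ := thetaP h u)
      (fun _ => norm_nonneg _) j i
      (abs_thetaP_sub_le _ _) (abs_thetaP_sub_le _ _)
  have h0 := hdir 0
  have h1 := hdir 1
  simp only [Fin.sum_univ_two] at hflux h0 h1 ⊢
  rw [abs_le] at hflux h0 h1 ⊢
  constructor <;> linarith

/-- Lemma 3.1 / `lem:linearized equation` of the paper.  Approximate
divergence-form identity for the angular function, with quantified remainder. -/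
theorem statement8
    (h : ℝ) (hh : 0 < h)
    (u : ℤ × ℤ → ℝ) (f Lf : (ℤ × ℤ) → ℝ → ℝ) (κ₀ : ℝ) (hκ₀ : 0 < κ₀)
    (heq : ∀ i : ℤ × ℤ, Lap h u i = f i (u i))
    (hH : Hplus h u f Lf κ₀)
    (hnd : NondegP u) :
    ∀ i : ℤ × ℤ,
      |∑ j : Fin 2,
          (Dp h (fun k => (rhoP h u k) ^ 2 * Dp h (thetaP h u) j k) j i +
           Dm h (fun k => (rhoP h u k) ^ 2 * Dm h (thetaP h u) j k) j i)|
        ≤ 2 * Real.exp (2 * π) * h *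
            (∑ j : Fin 2, (rhoP h u i) ^ 2 *
              (|Dp h (thetaP h u) j i| ^ 3 + |Dm h (thetaP h u) j i| ^ 3)) +
          2 * Real.exp (2 * π) * h *
            (∑ j : Fin 2, rhoP h u i *
              (|Dp h (rhoP h u) j i| * |Dp h (thetaP h u) j i| ^ 2 +
               |Dm h (rhoP h u) j i| * |Dm h (thetaP h u) j i| ^ 2)) +
          2 * κ₀ * h * rhoP h u i +
          h * (∑ j : Fin 2,
            (|Dp h (fun k => (rhoP h u k) ^ 2) j i| * |Dp h (Dp h (thetaP h u) j) j i| +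
             |Dm h (fun k => (rhoP h u k) ^ 2) j i| * |Dm h (Dm h (thetaP h u) j) j i| +
             h * (rhoP h u i) ^ 2 * |Lj h (Lj h (thetaP h u) j) j i|)) +
          h * (∑ j : Fin 2,
            (|Dp h (rhoP h u) j i| ^ 2 * |Dp h (thetaP h u) j i| +
             |Dm h (rhoP h u) j i| ^ 2 * |Dm h (thetaP h u) j i|)) :=
  statement8_general h hh u f Lf κ₀ heq hH
end
end
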